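/- Fix B ≥ 2. Define f₁(λ) = λ + e^{-λ} − λ²/2, f_{j+1}(λ) = f₁(λ) − e^{-f_j(λ)}, and p_B(λ) = e^{-λ} − λ²/2 − e^{-f_{B-1}(λ)}. Then p_B is strictly decreasing on (0, ∞) (on the domain where f_{B-1} is defined), and any root λ_B of p_B satisfies e^{-λ_B} − λ_B²/2 > 0; in particular λ_B is strictly smaller than the unique root of e^{-λ} = λ²/2. -/

import Mathlib

/-- `f₁(λ) = λ + e^{-λ} − λ²/2`. -/
noncomputable def f1 (l : ℝ) : ℝ := l + Real.exp (-l) - l ^ 2 / 2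

/-- `fseq n l` is `f_{n+1}(λ)` of the paper: `f_{j+1}(λ) = f₁(λ) − e^{-f_j(λ)}`. -/
noncomputable def fseq : ℕ → ℝ → ℝ
  | 0 => f1
  | n + 1 => fun l => f1 l - Real.exp (-(fseq n l))

/-!
Each `f_j` is strictly decreasing on all of `ℝ`: for `f₁` because `f₁'(λ) = 1 - λ - e^{-λ} < 0`
for `λ ≠ 0`, and inductively because `-e^{-f_j}` is then decreasing too. Since
`e^{-λ} - λ²/2` is strictly decreasing on `[0, ∞)`, so is `p_B`. At a root,
`e^{-λ_B} - λ_B²/2 = e^{-f_{B-1}(λ_B)} > 0`, and monotonicity of `e^{-λ} - λ²/2` puts `λ_B`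
below its zero.
-/

open Real Set

theorem hasDerivAt_f1 (x : ℝ) : HasDerivAt f1 (1 - exp (-x) - x) x := by
  have hexp : HasDerivAt (fun l : ℝ => exp (-l)) (-exp (-x)) x := by
    simpa using (hasDerivAt_neg x).exp
  have hsq : HasDerivAt (fun l : ℝ => l ^ 2 / 2) x x := by
    simpa using (hasDerivAt_pow 2 x).div_const 2
  exact (((hasDerivAt_id' x).add hexp).sub hsq).congr_deriv (by ring)

theorem strictAnti_f1 : StrictAnti f1 := by
  -- `f₁'` vanishes at `0`, so the derivative test is applied on each half-line.
  have hderiv_neg {x : ℝ} (hx : x ≠ 0) : 1 - exp (-x) - x < 0 := by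
    linarith [add_one_lt_exp (neg_ne_zero.2 hx)]
  have hcont : ContinuousOn f1 univ := by unfold f1; fun_prop
  refine StrictAntiOn.Iic_union_Ici (a := 0)
    (strictAntiOn_of_hasDerivWithinAt_neg (convex_Iic 0) (hcont.mono (subset_univ _))
      (fun x _ => (hasDerivAt_f1 x).hasDerivWithinAt) fun x hx => hderiv_neg ?_)
    (strictAntiOn_of_hasDerivWithinAt_neg (convex_Ici 0) (hcont.mono (subset_univ _))
      (fun x _ => (hasDerivAt_f1 x).hasDerivWithinAt) fun x hx => hderiv_neg ?_)
  · rw [interior_Iic] at hx; exact hx.ne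
  · rw [interior_Ici] at hx; exact hx.ne'

theorem StrictAntiOn.sub_exp_neg {f g : ℝ → ℝ} {s : Set ℝ} (hf : StrictAntiOn f s)
    (hg : AntitoneOn g s) : StrictAntiOn (fun l => f l - exp (-g l)) s := fun a ha b hb hab => by
  have := exp_le_exp.2 (neg_le_neg (hg ha hb hab.le))
  linarith [hf ha hb hab]

theorem strictAnti_fseq (n : ℕ) : StrictAnti (fseq n) := by
  induction n with
  | zero => exact strictAnti_f1
  | succ n ih =>
    exact strictAntiOn_univ.1 <|
      (strictAnti_f1.strictAntiOn univ).sub_exp_neg (ih.antitone.antitoneOn univ)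

theorem strictAntiOn_exp_neg_sub_sq_div_two :
    StrictAntiOn (fun l : ℝ => exp (-l) - l ^ 2 / 2) (Ici 0) := fun a ha b _ hab => by
  have := pow_lt_pow_left₀ hab ha two_ne_zero
  linarith [exp_lt_exp.2 (neg_lt_neg hab)]

theorem pB_strictAnti_and_root_below_general (B : ℕ) :
    StrictAntiOn
      (fun l : ℝ => Real.exp (-l) - l ^ 2 / 2 - Real.exp (-(fseq (B - 2) l)))
      (Set.Ioi (0:ℝ)) ∧
    ∀ lB : ℝ, 0 < lB →
      Real.exp (-lB) - lB ^ 2 / 2 - Real.exp (-(fseq (B - 2) lB)) = 0 →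
      (0 < Real.exp (-lB) - lB ^ 2 / 2 ∧
        ∀ l₁ : ℝ, 0 < l₁ → Real.exp (-l₁) = l₁ ^ 2 / 2 → lB < l₁) := by
  have hq := strictAntiOn_exp_neg_sub_sq_div_two
  refine ⟨(hq.sub_exp_neg ((strictAnti_fseq _).antitone.antitoneOn _)).mono Ioi_subset_Ici_self,
    fun lB hlB hroot => ?_⟩
  have hpos : 0 < exp (-lB) - lB ^ 2 / 2 := by
    linarith [exp_pos (-fseq (B - 2) lB)]
  exact ⟨hpos, fun l₁ hl₁ hroot₁ =>
    (hq.lt_iff_gt (mem_Ici.2 hl₁.le) (mem_Ici.2 hlB.le)).1 (by simpa [hroot₁] using hpos)⟩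

/-- Fix `B ≥ 2` and let `p_B(λ) = e^{-λ} − λ²/2 − e^{-f_{B-1}(λ)}`. Then `p_B` is
strictly decreasing on `(0, ∞)`, and any positive root `λ_B` of `p_B` satisfies
`e^{-λ_B} − λ_B²/2 > 0`; in particular `λ_B` is strictly smaller than the unique
root of `e^{-λ} = λ²/2`. -/
theorem pB_strictAnti_and_root_below (B : ℕ) (hB : 2 ≤ B) :
    StrictAntiOn
      (fun l : ℝ => Real.exp (-l) - l ^ 2 / 2 - Real.exp (-(fseq (B - 2) l)))
      (Set.Ioi (0:ℝ)) ∧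
    ∀ lB : ℝ, 0 < lB →
      Real.exp (-lB) - lB ^ 2 / 2 - Real.exp (-(fseq (B - 2) lB)) = 0 →
      (0 < Real.exp (-lB) - lB ^ 2 / 2 ∧
        ∀ l₁ : ℝ, 0 < l₁ → Real.exp (-l₁) = l₁ ^ 2 / 2 → lB < l₁) :=
  pB_strictAnti_and_root_below_general B
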